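/- Let G be a core cactus graph with degree sequence d. Then μ_1 ≥ μ_odd, i.e., the number of degree-1 vertices of G is at least the number of vertices of odd degree greater than 1. -/

import Mathlib

open Finset SimpleGraph

/-- The degree of a vertex `v`: the number of its neighbors in `G`. -/
noncomputable def gdeg {V : Type*} (G : SimpleGraph V) (v : V) : ℕ :=
  (G.neighborSet v).ncard

/-- The set of edge sets of cycles of `G`.  A cycle (as a subgraph) is identified
with its set of edges, which is invariant under rotation and reversal of the
corresponding closed walks. -/
def cycleEdgeSets {V : Type*} (G : SimpleGraph V) : Set (Set (Sym2 V)) :=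
  {s | ∃ (u : V) (w : G.Walk u u), w.IsCycle ∧ s = {e | e ∈ w.edges}}

/-- The number of cycles of `G`. -/
noncomputable def numCycles {V : Type*} (G : SimpleGraph V) : ℕ :=
  (cycleEdgeSets G).ncard

/-- A cactus graph: a connected graph in which every edge belongs to at most one
cycle, i.e. any two cycles sharing an edge coincide. -/
def IsCactus {V : Type*} (G : SimpleGraph V) : Prop :=
  G.Connected ∧
    ∀ s₁ ∈ cycleEdgeSets G, ∀ s₂ ∈ cycleEdgeSets G, (s₁ ∩ s₂).Nonempty → s₁ = s₂

/-- A unicyclic graph: a connected graph containing exactly one cycle. -/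
def IsUnicyclic {V : Type*} (G : SimpleGraph V) : Prop :=
  G.Connected ∧ ∃! s, s ∈ cycleEdgeSets G

/-- A graph is bridge-less if it has no bridge. -/
def BridgeLess {V : Type*} (G : SimpleGraph V) : Prop :=
  ∀ e, ¬ G.IsBridge e

/-- The number of bridges of `G`. -/
noncomputable def bridgeCount {V : Type*} (G : SimpleGraph V) : ℕ :=
  {e : Sym2 V | G.IsBridge e}.ncard

/-- A triangulated cactus: a cactus in which every cycle has length three and
every edge belongs to a cycle. -/
def IsTriangulatedCactus {V : Type*} (G : SimpleGraph V) : Prop :=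
  IsCactus G ∧ (∀ (u : V) (w : G.Walk u u), w.IsCycle → w.length = 3) ∧
    ∀ e ∈ G.edgeSet, ∃ (u : V) (w : G.Walk u u), w.IsCycle ∧ e ∈ w.edges

/-- The connected component of `x` in `G` contains a cycle. -/
def HasCycleFrom {V : Type*} (G : SimpleGraph V) (x : V) : Prop :=
  ∃ (u : V) (w : G.Walk u u), w.IsCycle ∧ G.Reachable x u

/-- A core cactus: a cactus graph with no bridge whose removal splits the graph
into two components each containing a cycle. -/
def IsCoreCactus {V : Type*} (G : SimpleGraph V) : Prop :=
  IsCactus G ∧ ∀ u v : V, G.IsBridge s(u, v) →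
    ¬ (HasCycleFrom (G.deleteEdges {s(u, v)}) u ∧
       HasCycleFrom (G.deleteEdges {s(u, v)}) v)

/-- `d 1, …, d n` is a degree sequence: non-increasing, with positive entries
bounded by `n - 1`, and with even sum. -/
def IsDegSeq (n : ℕ) (d : ℕ → ℕ) : Prop :=
  (∀ i j, 1 ≤ i → i ≤ j → j ≤ n → d j ≤ d i) ∧
  (∀ i, 1 ≤ i → i ≤ n → 1 ≤ d i ∧ d i ≤ n - 1) ∧
  Even (∑ i ∈ Finset.Icc 1 n, d i)

/-- A graph `G` on vertex set `{1, …, n}` realizes the sequence `d 1, …, d n`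
if the degree of vertex `i` is `d i` for every `i`. -/
def Realizes {n : ℕ} (G : SimpleGraph (Fin n)) (d : ℕ → ℕ) : Prop :=
  ∀ i : Fin n, gdeg G i = d (i.1 + 1)

/-- `μ₁`: the number of entries of the sequence equal to `1`. -/
def mu1 (n : ℕ) (d : ℕ → ℕ) : ℕ :=
  ((Finset.Icc 1 n).filter fun i => d i = 1).card

/-- `μ_odd`: the number of odd entries of the sequence that are greater than `1`. -/
def muOdd (n : ℕ) (d : ℕ → ℕ) : ℕ :=
  ((Finset.Icc 1 n).filter fun i => Odd (d i) ∧ 1 < d i).card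

/-- The bridge parameter `β = max {μ₁, (μ₁ + μ_odd)/2}` of a sequence. -/
def seqBeta (n : ℕ) (d : ℕ → ℕ) : ℕ :=
  max (mu1 n d) ((mu1 n d + muOdd n d) / 2)

/-- `μ₁` of a graph: the number of vertices of degree `1`. -/
noncomputable def gmu1 {V : Type*} (G : SimpleGraph V) : ℕ :=
  {v : V | gdeg G v = 1}.ncard

/-- `μ_odd` of a graph: the number of vertices of odd degree greater than `1`. -/
noncomputable def gmuOdd {V : Type*} (G : SimpleGraph V) : ℕ :=
  {v : V | Odd (gdeg G v) ∧ 1 < gdeg G v}.ncard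

/-- The bridge parameter `β = max {μ₁, (μ₁ + μ_odd)/2}` of a graph. -/
noncomputable def graphBeta {V : Type*} (G : SimpleGraph V) : ℕ :=
  max (gmu1 G) ((gmu1 G + gmuOdd G) / 2)

/-!
Deleting the edge at a vertex of degree one never decreases `μ_odd - μ₁`, and it preserves both
that cycles are edge-disjoint and that no bridge joins two cyclic sides; the degree-one vertex
lies on no cycle, so the cycles do not change. Repeat until no vertex of degree one is left.
Then every bridge has a side without cycles, which is a tree whose leaves other than the end of
the bridge would have degree one in the graph, so there is no bridge. Every edge then lies on
a unique cycle, and each cycle through a vertex uses exactly two of its edges, so all degrees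
are even and `μ_odd = 0`.
-/

section

variable {V : Type*} {G : SimpleGraph V}

def CyclesEdgeDisjoint (G : SimpleGraph V) : Prop :=
  ∀ s₁ ∈ cycleEdgeSets G, ∀ s₂ ∈ cycleEdgeSets G, (s₁ ∩ s₂).Nonempty → s₁ = s₂

/-- Unlike `IsCoreCactus`, this asks for adjacency: `IsBridge s(u, v)` also holds for vertices
in different components, and deleting edges disconnects the graph. -/
def NoBridgeBetweenCycles (G : SimpleGraph V) : Prop :=
  ∀ u v : V, G.Adj u v → G.IsBridge s(u, v) →
    ¬ (HasCycleFrom (G.deleteEdges {s(u, v)}) u ∧ HasCycleFrom (G.deleteEdges {s(u, v)}) v)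

def oddExcess (d : ℕ) : ℤ :=
  (if Odd d ∧ 1 < d then 1 else 0) - (if d = 1 then 1 else 0)

lemma oddExcess_le_oddExcess_sub_one_add_one (d : ℕ) : oddExcess d ≤ oddExcess (d - 1) + 1 := by
  unfold oddExcess
  split_ifs <;> grind

lemma gmuOdd_sub_gmu1_eq_sum_oddExcess [Fintype V] (G : SimpleGraph V) :
    (gmuOdd G : ℤ) - gmu1 G = ∑ v, oddExcess (gdeg G v) := by
  classical
  simp only [gmuOdd, gmu1, oddExcess, Finset.sum_sub_distrib, Set.ncard_eq_toFinset_card',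
    Set.toFinset_ofPred, Finset.natCast_card_filter]

lemma gdeg_eq_degree (G : SimpleGraph V) (v : V) [Fintype (G.neighborSet v)] :
    gdeg G v = G.degree v := by
  rw [gdeg, ← Nat.card_coe_set_eq, Nat.card_eq_fintype_card, card_neighborSet_eq_degree]

lemma gdeg_induce_of_neighborSet_subset {s : Set V} {v : s}
    (h : G.neighborSet v ⊆ s) : gdeg (G.induce s) v = gdeg G v := by
  rw [gdeg, gdeg, ← Set.ncard_image_of_injective _ Subtype.val_injective]
  congr 1
  ext a
  exact ⟨fun ⟨b, hb, hba⟩ => hba ▸ hb, fun ha => ⟨⟨a, h ha⟩, ha, rfl⟩⟩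

lemma gdeg_deleteEdges_of_notMem {e : Sym2 V} {w : V} (hw : w ∉ e) :
    gdeg (G.deleteEdges {e}) w = gdeg G w := by
  unfold gdeg
  congr 1
  ext a
  simp only [mem_neighborSet, deleteEdges_adj, Set.mem_singleton_iff, and_iff_left_iff_imp]
  rintro - rfl
  exact hw (Sym2.mem_mk_left w a)

lemma gdeg_deleteEdges_mk_left [Finite V] {x u : V} (h : G.Adj x u) :
    gdeg (G.deleteEdges {s(x, u)}) x = gdeg G x - 1 := by
  have : (G.deleteEdges {s(x, u)}).neighborSet x = G.neighborSet x \ {u} := by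
    ext a
    simp only [mem_neighborSet, deleteEdges_adj, Set.mem_singleton_iff, Set.mem_sdiff]
    refine and_congr_right fun hxa => ?_
    rw [Sym2.eq_iff]
    grind
  rw [gdeg, this, Set.ncard_sdiff_singleton_of_mem (s := G.neighborSet x) h, gdeg]

lemma gdeg_deleteEdges_mk_right [Finite V] {x u : V} (h : G.Adj x u) :
    gdeg (G.deleteEdges {s(x, u)}) u = gdeg G u - 1 := by
  rw [Sym2.eq_swap, gdeg_deleteEdges_mk_left h.symm]

lemma SimpleGraph.Walk.IsCycle.ncard_setOf_mk_mem_edges {u v : V} {w : G.Walk u u}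
    (hw : w.IsCycle) (hv : v ∈ w.support) : {a | s(v, a) ∈ w.edges}.ncard = 2 := by
  rw [← hw.ncard_neighborSet_toSubgraph_eq_two hv]
  congr 1
  ext a
  exact Walk.adj_toSubgraph_iff_mem_edges.symm

lemma two_le_gdeg_of_mem_support_of_isCycle [Finite V] {u v : V} {w : G.Walk u u}
    (hw : w.IsCycle) (hv : v ∈ w.support) : 2 ≤ gdeg G v := by
  rw [← hw.ncard_setOf_mk_mem_edges hv]
  exact Set.ncard_le_ncard (fun a ha => w.adj_of_mem_edges ha) (Set.toFinite _)

lemma isBridge_iff_forall_cycleEdgeSets {e : Sym2 V} (he : e ∈ G.edgeSet) :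
    G.IsBridge e ↔ ∀ s ∈ cycleEdgeSets G, e ∉ s := by
  rw [isBridge_iff_forall_cycle_notMem he]
  constructor
  · rintro h s ⟨u, w, hw, rfl⟩
    exact h w hw
  · intro h u w hw
    exact h _ ⟨u, w, hw, rfl⟩

lemma cycleEdgeSets_deleteEdges {e : Sym2 V} (he : ∀ s ∈ cycleEdgeSets G, e ∉ s) :
    cycleEdgeSets (G.deleteEdges {e}) = cycleEdgeSets G := by
  ext s
  constructor
  · rintro ⟨u, w, hw, rfl⟩
    refine ⟨u, w.mapLe (deleteEdges_le _), hw.mapLe _, ?_⟩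
    simp
  · rintro ⟨u, w, hw, rfl⟩
    have hew : e ∉ w.edges := he _ ⟨u, w, hw, rfl⟩
    refine ⟨u, w.transfer _ fun f hf => ?_, hw.transfer _, by rw [Walk.edges_transfer]⟩
    rw [edgeSet_deleteEdges]
    exact ⟨w.edges_subset_edgeSet hf, fun hfe => hew (hfe ▸ hf)⟩

lemma HasCycleFrom.mono {H : SimpleGraph V} (h : G ≤ H) {x : V} (hx : HasCycleFrom G x) :
    HasCycleFrom H x := by
  obtain ⟨u, w, hw, hr⟩ := hx
  exact ⟨u, w.mapLe h, hw.mapLe h, hr.mono h⟩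

lemma CyclesEdgeDisjoint.deleteEdges (hG : CyclesEdgeDisjoint G) {e : Sym2 V}
    (he : ∀ s ∈ cycleEdgeSets G, e ∉ s) : CyclesEdgeDisjoint (G.deleteEdges {e}) := by
  rw [CyclesEdgeDisjoint, cycleEdgeSets_deleteEdges he]
  exact hG

lemma NoBridgeBetweenCycles.deleteEdges (hG : NoBridgeBetweenCycles G) {e : Sym2 V}
    (he : ∀ s ∈ cycleEdgeSets G, e ∉ s) : NoBridgeBetweenCycles (G.deleteEdges {e}) := by
  intro a b hab hb hcyc
  have hadj : G.Adj a b := (deleteEdges_adj.mp hab).1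
  have hbG : G.IsBridge s(a, b) := by
    rw [isBridge_iff_forall_cycleEdgeSets hab, cycleEdgeSets_deleteEdges he] at hb
    exact (isBridge_iff_forall_cycleEdgeSets hadj).mpr hb
  have hle : (G.deleteEdges {e}).deleteEdges {s(a, b)} ≤ G.deleteEdges {s(a, b)} := by
    rw [deleteEdges_deleteEdges]
    exact deleteEdges_anti Set.subset_union_right
  exact hG a b hadj hbG ⟨hcyc.1.mono hle, hcyc.2.mono hle⟩

lemma exists_ne_reachable_gdeg_eq_one [Finite V] {H : SimpleGraph V} {x y : V} (hxy : H.Adj x y)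
    (hx : ¬ HasCycleFrom H x) : ∃ w ≠ x, H.Reachable x w ∧ gdeg H w = 1 := by
  classical
  have := Fintype.ofFinite V
  set C := H.connectedComponentMk x
  have hxC : x ∈ C.supp := rfl
  have htree : C.toSimpleGraph.IsTree := by
    refine ⟨C.connected_toSimpleGraph, fun z c hc => hx ?_⟩
    exact ⟨z, c.map C.toSimpleGraph_hom, hc.map Subtype.val_injective,
      C.reachable_of_mem_supp hxC z.2⟩
  have : Nontrivial C := ⟨⟨x, hxC⟩, ⟨y, C.mem_supp_of_adj_mem_supp hxC hxy⟩, by simpa using hxy.ne⟩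
  obtain ⟨a, b, hab, ha, hb⟩ := htree.exists_ne_and_degree_eq_one
  obtain ⟨w, hwx, hw⟩ : ∃ w : C, (w : V) ≠ x ∧ C.toSimpleGraph.degree w = 1 := by
    by_cases hax : (a : V) = x
    · exact ⟨b, fun hbx => hab (Subtype.ext (hax.trans hbx.symm)), hb⟩
    · exact ⟨a, hax, ha⟩
  refine ⟨w, hwx, C.reachable_of_mem_supp hxC w.2, ?_⟩
  rw [← gdeg_induce_of_neighborSet_subset fun _ h => C.mem_supp_of_adj_mem_supp w.2 h,
    gdeg_eq_degree]
  convert hw using 2 <;> rfl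

/-- The side at `u` is a tree; its leaves other than `u` (or `u` itself, if that side is a single
vertex) have degree one in `G`. -/
lemma exists_gdeg_eq_one_of_isBridge [Finite V] {u v : V} (huv : G.Adj u v)
    (hb : G.IsBridge s(u, v)) (hu : ¬ HasCycleFrom (G.deleteEdges {s(u, v)}) u) :
    ∃ w, gdeg G w = 1 := by
  by_cases hiso : ∃ y, (G.deleteEdges {s(u, v)}).Adj u y
  · obtain ⟨y, hy⟩ := hiso
    obtain ⟨w, hwu, hreach, hw⟩ := exists_ne_reachable_gdeg_eq_one hy hu
    have hwv : w ≠ v := by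
      rintro rfl
      exact hb hreach
    exact ⟨w, (gdeg_deleteEdges_of_notMem (by simp [hwu, hwv])).symm.trans hw⟩
  · refine ⟨u, ?_⟩
    have h0 : gdeg (G.deleteEdges {s(u, v)}) u = 0 :=
      (Set.ncard_eq_zero (Set.toFinite _)).mpr
        (Set.eq_empty_of_forall_notMem fun y hy => hiso ⟨y, hy⟩)
    have hpos : 0 < gdeg G u := (Set.ncard_pos (Set.toFinite _)).mpr ⟨v, huv⟩
    have := gdeg_deleteEdges_mk_left huv
    omega

lemma NoBridgeBetweenCycles.not_isBridge [Finite V]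
    (hG : NoBridgeBetweenCycles G) (hleaf : ∀ w, gdeg G w ≠ 1) {e : Sym2 V} (he : e ∈ G.edgeSet) :
    ¬ G.IsBridge e := by
  induction e using Sym2.ind with
  | _ u v =>
  intro hb
  by_cases hu : HasCycleFrom (G.deleteEdges {s(u, v)}) u
  · have hv : ¬ HasCycleFrom (G.deleteEdges {s(v, u)}) v := by
      rw [Sym2.eq_swap]
      exact fun hv => hG u v he hb ⟨hu, hv⟩
    obtain ⟨w, hw⟩ := exists_gdeg_eq_one_of_isBridge (G.adj_symm he) (by rwa [Sym2.eq_swap]) hv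
    exact hleaf w hw
  · obtain ⟨w, hw⟩ := exists_gdeg_eq_one_of_isBridge he hb hu
    exact hleaf w hw

/-- The edges at `v` are grouped by the unique cycle containing them, two edges per cycle. -/
lemma CyclesEdgeDisjoint.even_gdeg [Finite V] (hG : CyclesEdgeDisjoint G)
    {v : V} (hv : ∀ a, G.Adj v a → ∃ s ∈ cycleEdgeSets G, s(v, a) ∈ s) : Even (gdeg G v) := by
  classical
  have := Fintype.ofFinite V
  choose! φ hφ using hv
  set N := (G.neighborSet v).toFinset
  have hfiber : ∀ c ∈ N.image φ, Even (N.filter (φ · = c)).card := by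
    intro c hc
    obtain ⟨a₀, ha₀, rfl⟩ := Finset.mem_image.mp hc
    have ha₀' : G.Adj v a₀ := by simpa [N] using ha₀
    obtain ⟨⟨z, w, hw, hwc⟩, hva₀⟩ := hφ a₀ ha₀'
    have hN : N.filter (φ · = φ a₀) = {a | s(v, a) ∈ w.edges}.toFinset := by
      ext a
      simp only [N, Finset.mem_filter, Set.mem_toFinset, mem_neighborSet, Set.mem_ofPred_eq]
      constructor
      · rintro ⟨ha, hφa⟩
        simpa [hφa, hwc] using (hφ a ha).2
      · intro haw
        have ha : G.Adj v a := w.adj_of_mem_edges haw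
        exact ⟨ha, hG _ (hφ a ha).1 _ (hφ a₀ ha₀').1 ⟨s(v, a), (hφ a ha).2, hwc ▸ haw⟩⟩
    rw [hN, ← Set.ncard_eq_toFinset_card',
      hw.ncard_setOf_mk_mem_edges (w.fst_mem_support_of_mem_edges (hwc ▸ hva₀))]
    exact even_two
  rw [gdeg, Set.ncard_eq_toFinset_card', Finset.card_eq_sum_card_image φ N]
  exact Finset.even_sum _ hfiber

lemma sum_oddExcess_le_sum_oddExcess_deleteEdges [Fintype V] {x u : V}
    (h : G.Adj x u) (hx : gdeg G x = 1) :
    ∑ v, oddExcess (gdeg G v) ≤ ∑ v, oddExcess (gdeg (G.deleteEdges {s(x, u)}) v) := by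
  set G' := G.deleteEdges {s(x, u)}
  have hsplit : ∑ v, (oddExcess (gdeg G' v) - oddExcess (gdeg G v)) =
      (oddExcess (gdeg G' x) - oddExcess (gdeg G x)) +
        (oddExcess (gdeg G' u) - oddExcess (gdeg G u)) :=
    Fintype.sum_eq_add x u h.ne fun w ⟨hwx, hwu⟩ => by
      rw [gdeg_deleteEdges_of_notMem (by simp [hwx, hwu]), sub_self]
  rw [Finset.sum_sub_distrib, gdeg_deleteEdges_mk_left h, gdeg_deleteEdges_mk_right h,
    hx] at hsplit
  have hu := oddExcess_le_oddExcess_sub_one_add_one (gdeg G u)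
  have hx1 : oddExcess (1 - 1) - oddExcess 1 = 1 := by decide
  linarith

lemma oddExcess_eq_zero_of_even {d : ℕ} (hd : Even d) : oddExcess d = 0 := by
  have : d ≠ 1 := by rintro rfl; exact Nat.not_even_one hd
  simp [oddExcess, this, Nat.not_odd_iff_even.mpr hd]

theorem sum_oddExcess_nonpos [Fintype V] {G : SimpleGraph V} (hcyc : CyclesEdgeDisjoint G)
    (hcore : NoBridgeBetweenCycles G) : ∑ v, oddExcess (gdeg G v) ≤ 0 := by
  by_cases hleaf : ∃ x, gdeg G x = 1
  · obtain ⟨x, hx⟩ := hleaf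
    obtain ⟨u, hu⟩ := Set.ncard_eq_one.mp hx
    have hxu : G.Adj x u := show u ∈ G.neighborSet x from hu ▸ rfl
    have he : ∀ s ∈ cycleEdgeSets G, s(x, u) ∉ s := by
      rintro s ⟨z, w, hw, rfl⟩ hxw
      have := two_le_gdeg_of_mem_support_of_isCycle hw (w.fst_mem_support_of_mem_edges hxw)
      omega
    have hfewer : (G.edgeSet \ {s(x, u)}).ncard < G.edgeSet.ncard :=
      Set.ncard_sdiff_singleton_lt_of_mem hxu
    exact (sum_oddExcess_le_sum_oddExcess_deleteEdges hxu hx).trans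
      (sum_oddExcess_nonpos (hcyc.deleteEdges he) (hcore.deleteEdges he))
  · push Not at hleaf
    refine (Finset.sum_eq_zero fun v _ =>
      oddExcess_eq_zero_of_even (hcyc.even_gdeg fun a hva => ?_)).le
    simpa [isBridge_iff_forall_cycleEdgeSets (G.mem_edgeSet.mpr hva)] using
      hcore.not_isBridge hleaf (G.mem_edgeSet.mpr hva)
termination_by G.edgeSet.ncard

end

/-- In a core cactus graph, the number of degree-1 vertices is at
least the number of vertices of odd degree greater than 1. -/
theorem stmt13 {V : Type*} [Fintype V] (G : SimpleGraph V) (hG : IsCoreCactus G) :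
    gmuOdd G ≤ gmu1 G := by
  have h := sum_oddExcess_nonpos hG.1.2 fun u v _ hb => hG.2 u v hb
  rw [← gmuOdd_sub_gmu1_eq_sum_oddExcess] at h
  omega
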